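/- Let n ≥ 1, let π : ℝ^{2n+1} → ℝ be a C¹ function, and let K ≥ 0. Then π is K-Lipschitz with respect to the Carnot–Carathéodory distance, i.e. |π(p) − π(q)| ≤ K·d_cc(p,q) for all p, q ∈ ℝ^{2n+1}, if and only if the horizontal gradient is bounded by K: for every p = (x,y,t), ∑_{j=1}^n (X_jπ(p))² + (Y_jπ(p))² ≤ K², where X_jπ(p) = ∂_{x_j}π(p) − (1/2) y_j ∂_tπ(p) and Y_jπ(p) = ∂_{y_j}π(p) + (1/2) x_j ∂_tπ(p). -/

import Mathlib

open MeasureTheory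

noncomputable section

/-- The Heisenberg group `ℍⁿ` as `ℝⁿ × ℝⁿ × ℝ`, points written `p = (x, y, t)`. -/
abbrev Heis (n : ℕ) : Type := (Fin n → ℝ) × (Fin n → ℝ) × ℝ

/-- The contact form `θ` at the point `p`, evaluated on the tangent vector `v`:
`θ_p(v) = v_t − (1/2)∑ (x_j v_{y_j} − y_j v_{x_j})`. -/
def theta {n : ℕ} (p v : Heis n) : ℝ :=
  v.2.2 - (1 / 2) * ∑ j, (p.1 j * v.2.1 j - p.2.1 j * v.1 j)

/-- The sub-Riemannian (Carnot–Carathéodory) distance on `ℍⁿ`: the infimum of the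
horizontal lengths `∫₀¹ |(x'(s), y'(s))| ds` of `C¹` horizontal curves joining `p` to `q`. -/
def ccDist (n : ℕ) (p q : Heis n) : ℝ :=
  sInf { l : ℝ | ∃ c : ℝ → Heis n, ContDiff ℝ 1 c ∧ c 0 = p ∧ c 1 = q ∧
    (∀ s : ℝ, theta (c s) (deriv c s) = 0) ∧
    l = ∫ s in (0:ℝ)..1,
          Real.sqrt (∑ j, (deriv c s).1 j ^ 2 + ∑ j, (deriv c s).2.1 j ^ 2) }

/-- degree-7 polynomial helper -/
def P7 (A B C D E F G : ℝ) : ℝ → ℝ := fun x =>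
  A*x^1 + B*x^2 + C*x^3 + D*x^4 + E*x^5 + F*x^6 + G*x^7

def P7' (A B C D E F G : ℝ) : ℝ → ℝ := fun x =>
  A + 2*B*x + 3*C*x^2 + 4*D*x^3 + 5*E*x^4 + 6*F*x^5 + 7*G*x^6

lemma P7.hasDerivAt (A B C D E F G s : ℝ) :
    HasDerivAt (P7 A B C D E F G) (P7' A B C D E F G s) s := by
  have h : ∀ (m : ℕ) (c : ℝ), HasDerivAt (fun x : ℝ => c * x ^ m) (c * (↑m * s^(m-1))) s :=
    fun m c => HasDerivAt.const_mul c (hasDerivAt_pow m s)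
  have H := ((((((h 1 A).add (h 2 B)).add (h 3 C)).add (h 4 D)).add (h 5 E)).add
    (h 6 F)).add (h 7 G)
  refine H.congr_deriv ?_
  simp [P7']; push_cast; ring

lemma P7.contDiff (A B C D E F G : ℝ) : ContDiff ℝ 1 (P7 A B C D E F G) := by
  unfold P7; fun_prop

lemma fderiv_apply_decomp {n : ℕ} (π : Heis n → ℝ) (p v : Heis n) :
    fderiv ℝ π p v = (∑ j, v.1 j * fderiv ℝ π p (Pi.single j 1, 0, 0))
      + (∑ j, v.2.1 j * fderiv ℝ π p (0, Pi.single j 1, 0))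
      + v.2.2 * fderiv ℝ π p (0, 0, 1) := by
  have hv : v = (∑ j, v.1 j • ((Pi.single j 1 : Fin n → ℝ), (0 : Fin n → ℝ), (0:ℝ)))
      + (∑ j, v.2.1 j • ((0 : Fin n → ℝ), (Pi.single j 1 : Fin n → ℝ), (0:ℝ)))
      + v.2.2 • ((0 : Fin n → ℝ), (0 : Fin n → ℝ), (1:ℝ)) := by
    refine Prod.ext ?_ (Prod.ext ?_ ?_) <;>
      simp [Prod.fst_sum, Prod.snd_sum, ← Pi.single_smul, smul_eq_mul,
        Finset.univ_sum_single]
  conv_lhs => rw [hv]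
  rw [map_add, map_add, map_sum, map_sum]
  simp only [_root_.map_smul, smul_eq_mul]

def XD {n : ℕ} (π : Heis n → ℝ) (p : Heis n) (j : Fin n) : ℝ :=
  fderiv ℝ π p (Pi.single j 1, 0, 0) - (1 / 2) * p.2.1 j * fderiv ℝ π p (0, 0, 1)

def YD {n : ℕ} (π : Heis n → ℝ) (p : Heis n) (j : Fin n) : ℝ :=
  fderiv ℝ π p (0, Pi.single j 1, 0) + (1 / 2) * p.1 j * fderiv ℝ π p (0, 0, 1)

lemma fderiv_horiz {n : ℕ} (π : Heis n → ℝ) (p v : Heis n) (hv : theta p v = 0) :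
    fderiv ℝ π p v = ∑ j, (v.1 j * XD π p j + v.2.1 j * YD π p j) := by
  have h22 : v.2.2 = (1/2) * ∑ j, (p.1 j * v.2.1 j - p.2.1 j * v.1 j) := by
    have := hv; unfold theta at this; linarith
  rw [fderiv_apply_decomp π p v, h22, mul_assoc, Finset.sum_mul, Finset.mul_sum,
    ← Finset.sum_add_distrib, ← Finset.sum_add_distrib]
  refine Finset.sum_congr rfl fun j _ => ?_
  unfold XD YD; ring

lemma cs_bound {n : ℕ} (A B a b : Fin n → ℝ) :
    (∑ j, (a j * A j + b j * B j))^2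
      ≤ (∑ j, (A j^2 + B j^2)) * (∑ j, a j^2 + ∑ j, b j^2) := by
  have h := Finset.sum_mul_sq_le_sq_mul_sq Finset.univ (Sum.elim A B) (Sum.elim a b)
  simp only [Fintype.sum_sum_type, Sum.elim_inl, Sum.elim_inr] at h
  calc (∑ j, (a j * A j + b j * B j))^2
      = (∑ j, A j * a j + ∑ j, B j * b j)^2 := by
        rw [← Finset.sum_add_distrib]; congr 1; exact Finset.sum_congr rfl fun j _ => by ring
    _ ≤ (∑ j, A j^2 + ∑ j, B j^2) * (∑ j, a j^2 + ∑ j, b j^2) := h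
    _ = (∑ j, (A j^2 + B j^2)) * (∑ j, a j^2 + ∑ j, b j^2) := by
        rw [← Finset.sum_add_distrib]

lemma horiz_bound {n : ℕ} (π : Heis n → ℝ) (p v : Heis n) (hv : theta p v = 0)
    (K : ℝ) (hK : 0 ≤ K) (hg : ∑ j, (XD π p j^2 + YD π p j^2) ≤ K^2) :
    |fderiv ℝ π p v| ≤ K * Real.sqrt (∑ j, v.1 j^2 + ∑ j, v.2.1 j^2) := by
  rw [fderiv_horiz π p v hv]
  set S := ∑ j, (v.1 j * XD π p j + v.2.1 j * YD π p j) with hS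
  set V := ∑ j, v.1 j^2 + ∑ j, v.2.1 j^2 with hV
  have hV0 : 0 ≤ V := by positivity
  have h1 : S^2 ≤ K^2 * V := by
    calc S^2 ≤ (∑ j, (XD π p j^2 + YD π p j^2)) * V := cs_bound _ _ _ _
      _ ≤ K^2 * V := mul_le_mul_of_nonneg_right hg hV0
  calc |S| = Real.sqrt (S^2) := (Real.sqrt_sq_eq_abs S).symm
    _ ≤ Real.sqrt (K^2 * V) := Real.sqrt_le_sqrt h1
    _ = K * Real.sqrt V := by rw [Real.sqrt_mul (sq_nonneg K), Real.sqrt_sq hK]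

section Conn
variable {n : ℕ}

def cU (p q : Heis n) : Fin n → ℝ := fun j => q.1 j - p.1 j
def cV (p q : Heis n) : Fin n → ℝ := fun j => q.2.1 j - p.2.1 j
def cC (p q : Heis n) : ℝ := (1/2) * ∑ j, (p.1 j * cV p q j - p.2.1 j * cU p q j)
def cR (p q : Heis n) : ℝ := 350 * (q.2.2 - p.2.2 - cC p q)

def cPhi : ℝ → ℝ := P7 1 (-3) 2 0 0 0 0
def cPhid : ℝ → ℝ := P7' 1 (-3) 2 0 0 0 0
def cPsi (p q : Heis n) : ℝ → ℝ :=
  P7 (-(cR p q)/5) (6*(cR p q)/5) (-2*(cR p q)) (cR p q) 0 0 0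
def cPsid (p q : Heis n) : ℝ → ℝ :=
  P7' (-(cR p q)/5) (6*(cR p q)/5) (-2*(cR p q)) (cR p q) 0 0 0

def texA (p q : Heis n) (j0 : Fin n) : ℝ := -(cR p q)*(p.1 j0)/10 - (p.2.1 j0)/2
def texB (p q : Heis n) (j0 : Fin n) : ℝ := 3*(cR p q)*(p.1 j0)/5 + 3*(p.2.1 j0)/2
def texC (p q : Heis n) (j0 : Fin n) : ℝ :=
  -(cR p q)*(p.1 j0) + (cR p q)*(cU p q j0)/5 + (cR p q)/10 - (p.2.1 j0) + (cV p q j0)/2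
def texD (p q : Heis n) (j0 : Fin n) : ℝ :=
  (cR p q)*(p.1 j0)/2 - (cR p q)*(cU p q j0)/2 - 2*(cR p q)/5 - (cV p q j0)/2
def texE (p q : Heis n) (j0 : Fin n) : ℝ := 3*(cR p q)*(cU p q j0)/10 + 33*(cR p q)/50
def cTex (p q : Heis n) (j0 : Fin n) : ℝ → ℝ :=
  P7 (texA p q j0) (texB p q j0) (texC p q j0) (texD p q j0) (texE p q j0)
    (-(cR p q)/2) ((cR p q)/7)
def cTexd (p q : Heis n) (j0 : Fin n) : ℝ → ℝ :=
  P7' (texA p q j0) (texB p q j0) (texC p q j0) (texD p q j0) (texE p q j0)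
    (-(cR p q)/2) ((cR p q)/7)

def cX (p q : Heis n) (j0 : Fin n) : ℝ → Fin n → ℝ := fun s j =>
  p.1 j + s * cU p q j + (if j = j0 then cPhi s else 0)
def cXd (p q : Heis n) (j0 : Fin n) : ℝ → Fin n → ℝ := fun s j =>
  cU p q j + (if j = j0 then cPhid s else 0)
def cY (p q : Heis n) (j0 : Fin n) : ℝ → Fin n → ℝ := fun s j =>
  p.2.1 j + s * cV p q j + (if j = j0 then cPsi p q s else 0)
def cYd (p q : Heis n) (j0 : Fin n) : ℝ → Fin n → ℝ := fun s j =>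
  cV p q j + (if j = j0 then cPsid p q s else 0)
def cT (p q : Heis n) (j0 : Fin n) : ℝ → ℝ := fun s =>
  p.2.2 + ∑ j, ((1/2) * (p.1 j * cV p q j - p.2.1 j * cU p q j) * s
    + (if j = j0 then cTex p q j0 s else 0))
def cTd (p q : Heis n) (j0 : Fin n) : ℝ → ℝ := fun s =>
  ∑ j, ((1/2) * (p.1 j * cV p q j - p.2.1 j * cU p q j)
    + (if j = j0 then cTexd p q j0 s else 0))

def conn (p q : Heis n) (j0 : Fin n) : ℝ → Heis n := fun s =>
  (cX p q j0 s, cY p q j0 s, cT p q j0 s)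
def connD (p q : Heis n) (j0 : Fin n) : ℝ → Heis n := fun s =>
  (cXd p q j0 s, cYd p q j0 s, cTd p q j0 s)

lemma hasDerivAt_linpart (A B s : ℝ) : HasDerivAt (fun s : ℝ => A + s * B) B s := by
  simpa using ((hasDerivAt_id s).mul_const B).const_add A

lemma cX_hasDerivAt (p q : Heis n) (j0 : Fin n) (j : Fin n) (s : ℝ) :
    HasDerivAt (fun s => cX p q j0 s j) (cXd p q j0 s j) s := by
  unfold cX cXd
  by_cases h : j = j0
  · simp only [h, if_pos rfl]
    exact (hasDerivAt_linpart _ _ s).add (P7.hasDerivAt _ _ _ _ _ _ _ s)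
  · simp only [if_neg h, add_zero]
    exact hasDerivAt_linpart _ _ s

lemma cY_hasDerivAt (p q : Heis n) (j0 : Fin n) (j : Fin n) (s : ℝ) :
    HasDerivAt (fun s => cY p q j0 s j) (cYd p q j0 s j) s := by
  unfold cY cYd
  by_cases h : j = j0
  · simp only [h, if_pos rfl]
    exact (hasDerivAt_linpart _ _ s).add (P7.hasDerivAt _ _ _ _ _ _ _ s)
  · simp only [if_neg h, add_zero]
    exact hasDerivAt_linpart _ _ s

lemma cT_hasDerivAt (p q : Heis n) (j0 : Fin n) (s : ℝ) :
    HasDerivAt (cT p q j0) (cTd p q j0 s) s := by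
  unfold cT cTd
  refine HasDerivAt.const_add _ (HasDerivAt.fun_sum fun j _ => ?_)
  by_cases h : j = j0
  · subst h
    simp only [if_pos rfl]
    refine HasDerivAt.add ?_ (P7.hasDerivAt _ _ _ _ _ _ _ s)
    simpa using (hasDerivAt_id s).const_mul ((1/2) * (p.1 j * cV p q j - p.2.1 j * cU p q j))
  · simp only [if_neg h, add_zero]
    simpa using (hasDerivAt_id s).const_mul ((1/2) * (p.1 j * cV p q j - p.2.1 j * cU p q j))

lemma conn_hasDerivAt (p q : Heis n) (j0 : Fin n) (s : ℝ) :
    HasDerivAt (conn p q j0) (connD p q j0 s) s :=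
  (hasDerivAt_pi.mpr (fun j => cX_hasDerivAt p q j0 j s)).prodMk
    ((hasDerivAt_pi.mpr (fun j => cY_hasDerivAt p q j0 j s)).prodMk
      (cT_hasDerivAt p q j0 s))

lemma conn_deriv (p q : Heis n) (j0 : Fin n) (s : ℝ) :
    deriv (conn p q j0) s = connD p q j0 s :=
  (conn_hasDerivAt p q j0 s).deriv

lemma conn_contDiff (p q : Heis n) (j0 : Fin n) : ContDiff ℝ 1 (conn p q j0) := by
  refine ContDiff.prodMk ?_ (ContDiff.prodMk ?_ ?_)
  · refine contDiff_pi.mpr fun j => ?_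
    by_cases h : j = j0
    · simp only [cX, h, if_pos rfl]
      exact ContDiff.add (by fun_prop) (P7.contDiff _ _ _ _ _ _ _)
    · simp only [cX, if_neg h, add_zero]; fun_prop
  · refine contDiff_pi.mpr fun j => ?_
    by_cases h : j = j0
    · simp only [cY, h, if_pos rfl]
      exact ContDiff.add (by fun_prop) (P7.contDiff _ _ _ _ _ _ _)
    · simp only [cY, if_neg h, add_zero]; fun_prop
  · unfold cT
    refine ContDiff.add contDiff_const (ContDiff.sum fun j _ => ?_)
    by_cases h : j = j0
    · simp only [h, if_pos rfl]
      exact ContDiff.add (by fun_prop) (P7.contDiff _ _ _ _ _ _ _)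
    · simp only [if_neg h, add_zero]; fun_prop

lemma conn_zero (p q : Heis n) (j0 : Fin n) : conn p q j0 0 = p := by
  refine Prod.ext ?_ (Prod.ext ?_ ?_)
  · funext j
    by_cases h : j = j0 <;> simp [conn, cX, cPhi, P7, h]
  · funext j
    by_cases h : j = j0 <;> simp [conn, cY, cPsi, P7, h]
  · simp [conn, cT, cTex, P7]

lemma conn_one (p q : Heis n) (j0 : Fin n) : conn p q j0 1 = q := by
  have hTex1 : cTex p q j0 1 = cR p q / 350 := by
    simp only [cTex, P7, texA, texB, texC, texD, texE, one_pow]; ring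
  refine Prod.ext ?_ (Prod.ext ?_ ?_)
  · funext j
    by_cases h : j = j0 <;> simp [conn, cX, cPhi, P7, cU, h] <;> ring
  · funext j
    by_cases h : j = j0 <;> simp [conn, cY, cPsi, P7, cV, h] <;> ring
  · show cT p q j0 1 = q.2.2
    unfold cT
    rw [Finset.sum_add_distrib, Finset.sum_ite_eq' Finset.univ j0]
    simp only [Finset.mem_univ, if_pos, hTex1, mul_one]
    have : ∑ j, (1/2) * (p.1 j * cV p q j - p.2.1 j * cU p q j) = cC p q := by
      rw [cC, Finset.mul_sum]
    rw [this, cR]; ring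

lemma conn_horiz (p q : Heis n) (j0 : Fin n) (s : ℝ) :
    theta (conn p q j0 s) (deriv (conn p q j0) s) = 0 := by
  rw [conn_deriv]
  show cTd p q j0 s - (1/2) * ∑ j, (cX p q j0 s j * cYd p q j0 s j
    - cY p q j0 s j * cXd p q j0 s j) = 0
  unfold cTd
  rw [Finset.mul_sum, ← Finset.sum_sub_distrib]
  refine Finset.sum_eq_zero fun j _ => ?_
  unfold cX cXd cY cYd
  by_cases h : j = j0
  · subst h
    simp only [eq_self_iff_true, if_true]
    simp only [cPhi, cPhid, cPsi, cPsid, cTexd, texA, texB, texC, texD, texE, P7, P7']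
    ring
  · simp only [if_neg h, add_zero]
    ring

end Conn

lemma exists_horiz {n : ℕ} (hn : 1 ≤ n) (p q : Heis n) :
    ∃ c : ℝ → Heis n, ContDiff ℝ 1 c ∧ c 0 = p ∧ c 1 = q ∧
      ∀ s : ℝ, theta (c s) (deriv c s) = 0 :=
  ⟨conn p q ⟨0, hn⟩, conn_contDiff p q _, conn_zero p q _, conn_one p q _,
    conn_horiz p q _⟩

lemma ccSet_nonneg {n : ℕ} (p q : Heis n) :
    ∀ l ∈ { l : ℝ | ∃ c : ℝ → Heis n, ContDiff ℝ 1 c ∧ c 0 = p ∧ c 1 = q ∧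
      (∀ s : ℝ, theta (c s) (deriv c s) = 0) ∧
      l = ∫ s in (0:ℝ)..1,
            Real.sqrt (∑ j, (deriv c s).1 j ^ 2 + ∑ j, (deriv c s).2.1 j ^ 2) },
      0 ≤ l := by
  rintro l ⟨c, -, -, -, -, rfl⟩
  exact intervalIntegral.integral_nonneg zero_le_one fun u _ => Real.sqrt_nonneg _

lemma backward_dir {n : ℕ} (hn : 1 ≤ n) (π : Heis n → ℝ) (hπ : ContDiff ℝ 1 π)
    (K : ℝ) (hK : 0 ≤ K)
    (hg : ∀ p : Heis n, ∑ j, (XD π p j^2 + YD π p j^2) ≤ K^2)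
    (p q : Heis n) : |π p - π q| ≤ K * ccDist n p q := by
  set Sset := { l : ℝ | ∃ c : ℝ → Heis n, ContDiff ℝ 1 c ∧ c 0 = p ∧ c 1 = q ∧
      (∀ s : ℝ, theta (c s) (deriv c s) = 0) ∧
      l = ∫ s in (0:ℝ)..1,
            Real.sqrt (∑ j, (deriv c s).1 j ^ 2 + ∑ j, (deriv c s).2.1 j ^ 2) } with hSset
  have key : ∀ l ∈ Sset, |π p - π q| ≤ K * l := by
    rintro l ⟨c, hc, h0, h1, hθ, rfl⟩
    set h : ℝ → ℝ := fun s => π (c s) with hh_def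
    have hh : ContDiff ℝ 1 h := hπ.comp hc
    have hd : ∀ s : ℝ, HasDerivAt h (fderiv ℝ π (c s) (deriv c s)) s := fun s =>
      (hπ.differentiable one_ne_zero (c s)).hasFDerivAt.comp_hasDerivAt s
        ((hc.differentiable one_ne_zero s).hasDerivAt)
    have hderiv_eq : ∀ s : ℝ, deriv h s = fderiv ℝ π (c s) (deriv c s) := fun s => (hd s).deriv
    set g : ℝ → ℝ := fun s =>
      Real.sqrt (∑ j, (deriv c s).1 j ^ 2 + ∑ j, (deriv c s).2.1 j ^ 2) with hg_def
    have hdc : Continuous (deriv c) := hc.continuous_deriv le_rfl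
    have hgc : Continuous g := by
      refine Real.continuous_sqrt.comp (Continuous.add ?_ ?_)
      · exact continuous_finset_sum _ fun j _ =>
          ((continuous_apply j).comp (continuous_fst.comp hdc)).pow 2
      · exact continuous_finset_sum _ fun j _ =>
          ((continuous_apply j).comp (continuous_fst.comp (continuous_snd.comp hdc))).pow 2
    have pointwise : ∀ s : ℝ, |deriv h s| ≤ K * g s := fun s => by
      rw [hderiv_eq]
      exact horiz_bound π (c s) (deriv c s) (hθ s) K hK (hg (c s))
    have hint : ∫ s in (0:ℝ)..1, deriv h s = h 1 - h 0 :=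
      intervalIntegral.integral_deriv_eq_sub
        (fun x _ => (hh.differentiable one_ne_zero).differentiableAt)
        ((hh.continuous_deriv le_rfl).intervalIntegrable 0 1)
    calc |π p - π q| = |h 1 - h 0| := by rw [hh_def]; simp only [h0, h1]; rw [abs_sub_comm]
      _ = |∫ s in (0:ℝ)..1, deriv h s| := by rw [hint]
      _ ≤ ∫ s in (0:ℝ)..1, |deriv h s| :=
          intervalIntegral.abs_integral_le_integral_abs zero_le_one
      _ ≤ ∫ s in (0:ℝ)..1, K * g s := by
          refine intervalIntegral.integral_mono_on zero_le_one
            (((hh.continuous_deriv le_rfl).abs).intervalIntegrable 0 1)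
            ((continuous_const.mul hgc).intervalIntegrable 0 1)
            (fun x _ => pointwise x)
      _ = K * ∫ s in (0:ℝ)..1, g s := intervalIntegral.integral_const_mul K g
  obtain ⟨c₀, hc₀, h0₀, h1₀, hθ₀⟩ := exists_horiz hn p q
  have hl₀ : (∫ s in (0:ℝ)..1,
      Real.sqrt (∑ j, (deriv c₀ s).1 j ^ 2 + ∑ j, (deriv c₀ s).2.1 j ^ 2)) ∈ Sset :=
    ⟨c₀, hc₀, h0₀, h1₀, hθ₀, rfl⟩
  have hcc : ccDist n p q = sInf Sset := rfl
  rcases eq_or_lt_of_le hK with hK0 | hK0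
  · have h1 := key _ hl₀
    rw [← hK0] at h1 ⊢
    simpa using h1
  · have h1 : |π p - π q| / K ≤ sInf Sset := by
      refine le_csInf ⟨_, hl₀⟩ fun l hl => ?_
      rw [div_le_iff₀ hK0, mul_comm]
      exact key l hl
    rw [hcc, mul_comm]
    exact (div_le_iff₀ hK0).mp h1

lemma forward_dir {n : ℕ} (π : Heis n → ℝ) (hπ : ContDiff ℝ 1 π) (K : ℝ) (hK : 0 ≤ K)
    (hlip : ∀ p q : Heis n, |π p - π q| ≤ K * ccDist n p q) (p : Heis n) :
    ∑ j, (XD π p j^2 + YD π p j^2) ≤ K^2 := by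
  have main : ∀ aa bb : Fin n → ℝ,
      |fderiv ℝ π p ((aa, bb, (1/2) * ∑ j, (p.1 j * bb j - p.2.1 j * aa j)) : Heis n)|
        ≤ K * Real.sqrt (∑ j, aa j^2 + ∑ j, bb j^2) := by
    intro aa bb
    set w : ℝ := (1/2) * ∑ j, (p.1 j * bb j - p.2.1 j * aa j) with hw
    set M : ℝ := Real.sqrt (∑ j, aa j^2 + ∑ j, bb j^2) with hM
    have hM0 : 0 ≤ M := Real.sqrt_nonneg _
    set γ : ℝ → Heis n := fun ε =>
      ((fun j => p.1 j + ε * aa j, fun j => p.2.1 j + ε * bb j, p.2.2 + ε * w) : Heis n)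
      with hγdef
    have hγ : ∀ ε : ℝ, HasDerivAt γ ((aa, bb, w) : Heis n) ε := fun ε =>
      (hasDerivAt_pi.mpr fun j => hasDerivAt_linpart _ _ ε).prodMk
        ((hasDerivAt_pi.mpr fun j => hasDerivAt_linpart _ _ ε).prodMk
          (hasDerivAt_linpart _ _ ε))
    have hγ0 : γ 0 = p := by
      refine Prod.ext ?_ (Prod.ext ?_ ?_) <;> simp [hγdef]
    have claim1 : ∀ ε : ℝ, ccDist n p (γ ε) ≤ |ε| * M := by
      intro ε
      set c : ℝ → Heis n := fun s =>
        ((fun j => p.1 j + s * (ε * aa j), fun j => p.2.1 j + s * (ε * bb j),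
          p.2.2 + s * (ε * w)) : Heis n) with hcdef
      have hcd : ∀ s : ℝ, HasDerivAt c
          (((fun j => ε * aa j), (fun j => ε * bb j), ε * w) : Heis n) s := fun s =>
        (hasDerivAt_pi.mpr fun j => hasDerivAt_linpart _ _ s).prodMk
          ((hasDerivAt_pi.mpr fun j => hasDerivAt_linpart _ _ s).prodMk
            (hasDerivAt_linpart _ _ s))
      have hcderiv : ∀ s : ℝ, deriv c s
          = (((fun j => ε * aa j), (fun j => ε * bb j), ε * w) : Heis n) :=
        fun s => (hcd s).deriv
      have hcC : ContDiff ℝ 1 c := by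
        refine ContDiff.prodMk (contDiff_pi.mpr fun j => by fun_prop)
          (ContDiff.prodMk (contDiff_pi.mpr fun j => by fun_prop) (by fun_prop))
      have hc0 : c 0 = p := by
        refine Prod.ext ?_ (Prod.ext ?_ ?_) <;> simp [hcdef]
      have hc1 : c 1 = γ ε := by
        refine Prod.ext ?_ (Prod.ext ?_ ?_) <;> simp [hcdef, hγdef] <;> ring_nf
      have hθc : ∀ s : ℝ, theta (c s) (deriv c s) = 0 := by
        intro s
        rw [hcderiv]
        show ε * w - (1/2) * ∑ j, ((p.1 j + s * (ε * aa j)) * (ε * bb j)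
          - (p.2.1 j + s * (ε * bb j)) * (ε * aa j)) = 0
        have : ∀ j ∈ Finset.univ, (p.1 j + s * (ε * aa j)) * (ε * bb j)
            - (p.2.1 j + s * (ε * bb j)) * (ε * aa j)
            = ε * (p.1 j * bb j - p.2.1 j * aa j) := fun j _ => by ring
        rw [Finset.sum_congr rfl this, ← Finset.mul_sum, hw]
        ring
      have hlen : ∀ s : ℝ, Real.sqrt (∑ j, (deriv c s).1 j ^ 2 + ∑ j, (deriv c s).2.1 j ^ 2)
          = |ε| * M := by
        intro s
        rw [hcderiv]
        show Real.sqrt (∑ j, (ε * aa j) ^ 2 + ∑ j, (ε * bb j) ^ 2) = |ε| * M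
        have e1 : ∑ j, (ε * aa j) ^ 2 = ε^2 * ∑ j, aa j^2 := by
          rw [Finset.mul_sum]; exact Finset.sum_congr rfl fun j _ => by ring
        have e2 : ∑ j, (ε * bb j) ^ 2 = ε^2 * ∑ j, bb j^2 := by
          rw [Finset.mul_sum]; exact Finset.sum_congr rfl fun j _ => by ring
        rw [e1, e2, ← mul_add, Real.sqrt_mul (sq_nonneg ε), Real.sqrt_sq_eq_abs, hM]
      have hmem : (∫ s in (0:ℝ)..1,
          Real.sqrt (∑ j, (deriv c s).1 j ^ 2 + ∑ j, (deriv c s).2.1 j ^ 2))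
          ∈ { l : ℝ | ∃ c : ℝ → Heis n, ContDiff ℝ 1 c ∧ c 0 = p ∧ c 1 = γ ε ∧
            (∀ s : ℝ, theta (c s) (deriv c s) = 0) ∧
            l = ∫ s in (0:ℝ)..1,
              Real.sqrt (∑ j, (deriv c s).1 j ^ 2 + ∑ j, (deriv c s).2.1 j ^ 2) } :=
        ⟨c, hcC, hc0, hc1, hθc, rfl⟩
      have hint : (∫ s in (0:ℝ)..1,
          Real.sqrt (∑ j, (deriv c s).1 j ^ 2 + ∑ j, (deriv c s).2.1 j ^ 2)) = |ε| * M := by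
        simp only [hlen]
        simp
      calc ccDist n p (γ ε) ≤ ∫ s in (0:ℝ)..1,
            Real.sqrt (∑ j, (deriv c s).1 j ^ 2 + ∑ j, (deriv c s).2.1 j ^ 2) :=
          csInf_le ⟨0, fun l hl => ccSet_nonneg p (γ ε) l hl⟩ hmem
        _ = |ε| * M := hint
    have claim2 : HasDerivAt (fun ε => π (γ ε)) (fderiv ℝ π p ((aa, bb, w) : Heis n)) 0 := by
      have h := (hπ.differentiable one_ne_zero (γ 0)).hasFDerivAt.comp_hasDerivAt 0 (hγ 0)
      rw [hγ0] at h
      exact h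
    have hslope := hasDerivAt_iff_tendsto_slope.mp claim2
    refine le_of_tendsto hslope.abs ?_
    filter_upwards [self_mem_nhdsWithin] with ε hε
    have hεne : ε ≠ 0 := hε
    rw [slope_def_field, sub_zero]
    have h1 : |π (γ ε) - π (γ 0)| ≤ K * M * |ε| := by
      rw [hγ0, abs_sub_comm]
      calc |π p - π (γ ε)| ≤ K * ccDist n p (γ ε) := hlip p (γ ε)
        _ ≤ K * (|ε| * M) := mul_le_mul_of_nonneg_left (claim1 ε) hK
        _ = K * M * |ε| := by ring
    rw [abs_div]
    rw [div_le_iff₀ (abs_pos.mpr hεne)]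
    exact h1
  -- instantiate
  set aa : Fin n → ℝ := fun j => XD π p j with haa
  set bb : Fin n → ℝ := fun j => YD π p j with hbb
  set G : ℝ := ∑ j, (XD π p j^2 + YD π p j^2) with hG
  have hG0 : 0 ≤ G := Finset.sum_nonneg fun j _ => by positivity
  have hθp : theta p ((aa, bb, (1/2) * ∑ j, (p.1 j * bb j - p.2.1 j * aa j)) : Heis n) = 0 :=
    sub_self _
  have hval : fderiv ℝ π p
      ((aa, bb, (1/2) * ∑ j, (p.1 j * bb j - p.2.1 j * aa j)) : Heis n) = G := by
    rw [fderiv_horiz π p _ hθp, hG]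
    exact Finset.sum_congr rfl fun j _ => by simp [haa, hbb]; ring
  have hargs : ∑ j, aa j^2 + ∑ j, bb j^2 = G := by
    rw [hG, Finset.sum_add_distrib]
  have h2 := main aa bb
  rw [hval, hargs] at h2
  have hs : Real.sqrt G ^ 2 = G := Real.sq_sqrt hG0
  have hsn : 0 ≤ Real.sqrt G := Real.sqrt_nonneg G
  have h3 : G ≤ K * Real.sqrt G := (abs_le.mp h2).2
  nlinarith [sq_nonneg (K - Real.sqrt G)]

/-- A `C¹` function `π : ℍⁿ → ℝ` is `K`-Lipschitz for the Carnot–Carathéodory distance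
if and only if its horizontal gradient is bounded by `K`:
`∑_j (X_jπ)² + (Y_jπ)² ≤ K²`, where `X_jπ = ∂_{x_j}π − (1/2) y_j ∂_tπ` and
`Y_jπ = ∂_{y_j}π + (1/2) x_j ∂_tπ`. -/
theorem stmt16 (n : ℕ) (hn : 1 ≤ n) (π : Heis n → ℝ) (hπ : ContDiff ℝ 1 π)
    (K : ℝ) (hK : 0 ≤ K) :
    (∀ p q : Heis n, |π p - π q| ≤ K * ccDist n p q) ↔
    (∀ p : Heis n,
      ∑ j : Fin n,
        ((fderiv ℝ π p (Pi.single j 1, 0, 0)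
            - (1 / 2) * p.2.1 j * fderiv ℝ π p (0, 0, 1)) ^ 2
          + (fderiv ℝ π p (0, Pi.single j 1, 0)
            + (1 / 2) * p.1 j * fderiv ℝ π p (0, 0, 1)) ^ 2) ≤ K ^ 2) := by
  constructor
  · intro hlip p
    simpa [XD, YD] using forward_dir π hπ K hK hlip p
  · intro hg p q
    exact backward_dir hn π hπ K hK (fun r => by simpa [XD, YD] using hg r) p q
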